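/- arXiv:1204.2997 — 3 statements merged into one kernel-verified Lean document; each statement's English description precedes it below -/
import Mathlib

section
/- For k ≥ 2 and a finite set S, the rational functions q_k(S) = e_k(S)/e_{k-1}(S) satisfy k·q_k(S) = Σ_{j∈S} x_j·q_{k-1}(S\{j}) / (x_j + q_{k-1}(S\{j})) in the field of rational functions, wherever the denominators are nonzero. -/
open MvPolynomial

/-- The `k`-th elementary symmetric polynomial in the variables indexed by the finite set `S`. -/
noncomputable def esymmS {σ : Type*} [DecidableEq σ] (S : Finset σ) (k : ℕ) :
    MvPolynomial σ ℝ :=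
  ∑ T ∈ S.powersetCard k, ∏ j ∈ T, X j

/-- The canonical map into the field of rational functions. -/
noncomputable def toK {σ : Type*} :
    MvPolynomial σ ℝ →+* FractionRing (MvPolynomial σ ℝ) :=
  algebraMap _ _

/-- `q_k(S) = e_k(S)/e_{k-1}(S)` in the field of rational functions. -/
noncomputable def qS {σ : Type*} [DecidableEq σ] (S : Finset σ) (k : ℕ) :
    FractionRing (MvPolynomial σ ℝ) :=
  toK (esymmS S k) / toK (esymmS S (k - 1))

/-!
Splitting the `(m+1)`-subsets of `S` according to whether they contain `j` gives
`e_{m+1}(S) = e_{m+1}(S \ {j}) + x_j e_m(S \ {j})`, so that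
`x_j + q_{m+1}(S \ {j}) = e_{m+1}(S) / e_m(S \ {j})` and each summand of the right-hand side
collapses to `x_j e_{m+1}(S \ {j}) / e_{m+1}(S)`. Summing over `j` counts every
`(m+2)`-subset of `S` once for each of its `m+2` elements, which is the identity
`Σ_j x_j e_{m+1}(S \ {j}) = (m+2) e_{m+2}(S)`.
-/

namespace Finset

variable {α : Type*} [DecidableEq α]

theorem filter_notMem_powersetCard (S : Finset α) (j : α) (n : ℕ) :
    {U ∈ S.powersetCard n | j ∉ U} = (S.erase j).powersetCard n := by
  ext U
  simp only [mem_filter, mem_powersetCard, subset_erase]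
  tauto

end Finset

theorem toK_ne_zero {σ : Type*} {p : MvPolynomial σ ℝ} (hp : p ≠ 0) : toK p ≠ 0 :=
  (map_ne_zero_iff _ (IsFractionRing.injective (MvPolynomial σ ℝ) _)).mpr hp

section ElementarySymmetric

open Finset

variable {σ : Type*} [DecidableEq σ] {S : Finset σ} {j : σ}

theorem X_mul_esymmS_erase (hj : j ∈ S) (m : ℕ) :
    X j * esymmS (S.erase j) m = ∑ U ∈ S.powersetCard (m + 1) with j ∈ U, ∏ i ∈ U, X i := by
  rw [esymmS, mul_sum]
  refine sum_nbij' (insert j) (erase · j) ?_ ?_ ?_ ?_ ?_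
  · intro T hT
    obtain ⟨⟨hTS, hjT⟩, rfl⟩ : (T ⊆ S ∧ j ∉ T) ∧ #T = m := by simpa [subset_erase] using hT
    simpa [hjT] using insert_subset hj hTS
  · intro U hU
    obtain ⟨⟨hUS, hcard⟩, hjU⟩ : (U ⊆ S ∧ #U = m + 1) ∧ j ∈ U := by simpa using hU
    simpa [card_erase_of_mem hjU, hcard] using erase_subset_erase j hUS
  · intro T hT
    exact erase_insert (notMem_mono (mem_powersetCard.mp hT).1 (notMem_erase j S))
  · intro U hU
    exact insert_erase (mem_filter.mp hU).2
  · intro T hT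
    rw [prod_insert (notMem_mono (mem_powersetCard.mp hT).1 (notMem_erase j S))]

theorem esymmS_succ_eq_esymmS_erase_add (hj : j ∈ S) (m : ℕ) :
    esymmS S (m + 1) = esymmS (S.erase j) (m + 1) + X j * esymmS (S.erase j) m := by
  rw [X_mul_esymmS_erase hj, esymmS, esymmS, ← filter_notMem_powersetCard S j,
    sum_filter_not_add_sum_filter]

theorem sum_X_mul_esymmS_erase (S : Finset σ) (m : ℕ) :
    ∑ j ∈ S, X j * esymmS (S.erase j) m = (m + 1) • esymmS S (m + 1) := by
  calc ∑ j ∈ S, X j * esymmS (S.erase j) m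
      = ∑ j ∈ S, ∑ U ∈ S.powersetCard (m + 1) with j ∈ U, ∏ i ∈ U, X i :=
        sum_congr rfl fun j hj => X_mul_esymmS_erase hj m
    _ = ∑ U ∈ S.powersetCard (m + 1), ∑ _j ∈ U, ∏ i ∈ U, X i := by
        refine sum_comm' fun j U => ?_
        simp only [mem_filter, mem_powersetCard]
        exact ⟨fun h => ⟨h.2.2, h.2.1⟩, fun h => ⟨h.2.1 h.1, h.2, h.1⟩⟩
    _ = (m + 1) • esymmS S (m + 1) := by
        rw [esymmS, smul_sum]
        refine sum_congr rfl fun U hU => ?_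
        rw [sum_const, (mem_powersetCard.mp hU).2]

theorem toK_X_add_qS_erase (hj : j ∈ S) {m : ℕ} (hm : esymmS (S.erase j) m ≠ 0) :
    toK (X j) + qS (S.erase j) (m + 1) = toK (esymmS S (m + 1)) / toK (esymmS (S.erase j) m) := by
  rw [qS, Nat.add_sub_cancel, esymmS_succ_eq_esymmS_erase_add hj, map_add, map_mul, add_div,
    mul_div_cancel_right₀ _ (toK_ne_zero hm), add_comm]

theorem toK_X_mul_qS_erase_div (hj : j ∈ S) {m : ℕ} (hm : esymmS (S.erase j) m ≠ 0) :
    toK (X j) * qS (S.erase j) (m + 1) / (toK (X j) + qS (S.erase j) (m + 1)) =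
      toK (X j * esymmS (S.erase j) (m + 1)) / toK (esymmS S (m + 1)) := by
  rw [toK_X_add_qS_erase hj hm, qS, Nat.add_sub_cancel, map_mul, ← mul_div_assoc,
    div_div_div_cancel_right₀ (toK_ne_zero hm)]

end ElementarySymmetric

theorem q_recursion_general {σ : Type*} [DecidableEq σ] (S : Finset σ) (k : ℕ) (hk : 2 ≤ k)
    (h2 : ∀ j ∈ S, esymmS (S.erase j) (k - 2) ≠ 0) :
    (k : FractionRing (MvPolynomial σ ℝ)) * qS S k =
      ∑ j ∈ S, toK (X j) * qS (S.erase j) (k - 1) /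
        (toK (X j) + qS (S.erase j) (k - 1)) := by
  obtain ⟨m, rfl⟩ : ∃ m, k = m + 2 := ⟨k - 2, by omega⟩
  calc ((m + 2 : ℕ) : FractionRing (MvPolynomial σ ℝ)) * qS S (m + 2)
      = toK ((m + 2) • esymmS S (m + 2)) / toK (esymmS S (m + 1)) := by
        rw [qS, map_nsmul, nsmul_eq_mul, mul_div_assoc]; rfl
    _ = ∑ j ∈ S, toK (X j * esymmS (S.erase j) (m + 1)) / toK (esymmS S (m + 1)) := by
        rw [← sum_X_mul_esymmS_erase, map_sum, Finset.sum_div]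
    _ = ∑ j ∈ S, toK (X j) * qS (S.erase j) (m + 1) / (toK (X j) + qS (S.erase j) (m + 1)) :=
        Finset.sum_congr rfl fun j hj => (toK_X_mul_qS_erase_div hj (h2 j hj)).symm

/-- For `k ≥ 2`, `k·q_k(S) = Σ_{j∈S} x_j·q_{k-1}(S\{j}) / (x_j + q_{k-1}(S\{j}))`
wherever the denominators are nonzero. -/
theorem q_recursion {σ : Type*} [DecidableEq σ] (S : Finset σ) (k : ℕ) (hk : 2 ≤ k)
    (h1 : esymmS S (k - 1) ≠ 0)
    (h2 : ∀ j ∈ S, esymmS (S.erase j) (k - 2) ≠ 0)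
    (h3 : ∀ j ∈ S, toK (X j) + qS (S.erase j) (k - 1) ≠ 0) :
    (k : FractionRing (MvPolynomial σ ℝ)) * qS S k =
      ∑ j ∈ S, toK (X j) * qS (S.erase j) (k - 1) /
        (toK (X j) + qS (S.erase j) (k - 1)) :=
  q_recursion_general S k hk h2
end

section
/- A homogeneous polynomial h of degree d on ℝⁿ is hyperbolic with respect to each point e of an open set U ⊆ ℝⁿ if and only if h(z) ≠ 0 for all z in the tube U + iℝⁿ = {x + iy : x ∈ U, y ∈ ℝⁿ}. -/
open MvPolynomial

/-- `h` is hyperbolic with respect to `e`: `h(e) ≠ 0` and `t ↦ h(x + t·e)` has only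
real roots for every `x ∈ ℝⁿ`. -/
def Hyperbolic {n : ℕ} (h : MvPolynomial (Fin n) ℝ) (e : Fin n → ℝ) : Prop :=
  eval e h ≠ 0 ∧ ∀ (x : Fin n → ℝ) (t : ℂ),
    aeval (fun i => (x i : ℂ) + t * (e i : ℂ)) h = 0 → t.im = 0

/-!
Both directions rest on homogeneity: `h(c • z) = cᵈ h(z)`, so for `c ≠ 0` the zeros of `h` form
a complex cone. The tube point `x + iy` equals `i (y - i x)`, so a zero of `h` there is the
non-real root `t = -i` of `t ↦ h(y + t x)`. Conversely, if `t = a + ib` with `b ≠ 0` is a root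
of `t ↦ h(x + t e)`, then `x + t e = ib (e + iv)` with `v = -(a e + x) / b`, which puts a zero
of `h` on the tube over `e`.
-/

theorem MvPolynomial.IsHomogeneous.aeval_smul {σ R S : Type*} [CommSemiring R] [CommSemiring S]
    [Algebra R S] {p : MvPolynomial σ R} {d : ℕ} (hp : p.IsHomogeneous d) (c : S) (z : σ → S) :
    MvPolynomial.aeval (c • z) p = c ^ d * MvPolynomial.aeval z p := by
  conv_lhs => rw [p.as_sum]
  conv_rhs => rw [p.as_sum]
  simp only [map_sum, Finset.mul_sum]
  refine Finset.sum_congr rfl fun k hk => ?_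
  have hdeg : k.degree = d := by
    rw [Finsupp.degree_eq_weight_one]
    exact hp (mem_support_iff.mp hk)
  rw [aeval_monomial, aeval_monomial, ← hdeg, Finsupp.degree_apply, ← Finset.prod_pow_eq_pow_sum]
  simp only [Pi.smul_apply, smul_eq_mul, mul_pow, Finsupp.prod, Finset.prod_mul_distrib]
  ring

theorem MvPolynomial.IsHomogeneous.aeval_smul_eq_zero_iff {σ R S : Type*} [CommSemiring R]
    [CommSemiring S] [NoZeroDivisors S] [Algebra R S] {p : MvPolynomial σ R} {d : ℕ}
    (hp : p.IsHomogeneous d) {c : S} (hc : c ≠ 0) (z : σ → S) :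
    MvPolynomial.aeval (c • z) p = 0 ↔ MvPolynomial.aeval z p = 0 := by
  rw [hp.aeval_smul, mul_eq_zero, or_iff_right (pow_ne_zero _ hc)]

theorem aeval_ofReal {σ : Type*} (x : σ → ℝ) (p : MvPolynomial σ ℝ) :
    aeval (fun i => (x i : ℂ)) p = (eval x p : ℂ) :=
  aeval_algebraMap_apply ℂ x p

open Complex in
theorem ofReal_add_mul_I_eq_I_smul {σ : Type*} (x y : σ → ℝ) :
    (fun i => (x i : ℂ) + (y i : ℂ) * I) = I • fun i => (y i : ℂ) + (-I) * (x i : ℂ) := by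
  funext i
  simp only [Pi.smul_apply, smul_eq_mul]
  linear_combination (x i : ℂ) * I_mul_I

open Complex in
theorem ofReal_add_mul_ofReal_eq_smul {σ : Type*} (x e : σ → ℝ) {t : ℂ} (ht : t.im ≠ 0) :
    (fun i => (x i : ℂ) + t * (e i : ℂ)) =
      ((t.im : ℂ) * I) • fun i => (e i : ℂ) + ((-(t.re * e i + x i) / t.im : ℝ) : ℂ) * I := by
  funext i
  have ht' : (t.im : ℂ) ≠ 0 := ofReal_ne_zero.mpr ht
  simp only [Pi.smul_apply, smul_eq_mul]
  push_cast
  field_simp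
  linear_combination (e i : ℂ) * (re_add_im t).symm + ((x i : ℂ) + e i * t.re) * I_sq

theorem hyperbolic_iff_nonvanishing_tube_general {n d : ℕ} (h : MvPolynomial (Fin n) ℝ)
    (hd : h.IsHomogeneous d) (U : Set (Fin n → ℝ)) :
    (∀ e ∈ U, Hyperbolic h e) ↔
      ∀ x ∈ U, ∀ y : Fin n → ℝ,
        aeval (fun i => (x i : ℂ) + (y i : ℂ) * Complex.I) h ≠ 0 := by
  constructor
  · intro hyp x hx y hzero
    rw [ofReal_add_mul_I_eq_I_smul, hd.aeval_smul_eq_zero_iff Complex.I_ne_zero] at hzero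
    simpa using (hyp x hx).2 y (-Complex.I) hzero
  · intro hnv e he
    refine ⟨fun he0 => hnv e he 0 ?_, fun x t hzero => ?_⟩
    · simpa [aeval_ofReal] using he0
    · by_contra him
      have hc : (t.im : ℂ) * Complex.I ≠ 0 :=
        mul_ne_zero (Complex.ofReal_ne_zero.mpr him) Complex.I_ne_zero
      rw [ofReal_add_mul_ofReal_eq_smul x e him, hd.aeval_smul_eq_zero_iff hc] at hzero
      exact hnv e he _ hzero

/-- A homogeneous polynomial of degree `d` is hyperbolic with respect to each point of an
open set `U` iff it does not vanish on the tube `U + iℝⁿ`. -/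
theorem hyperbolic_iff_nonvanishing_tube {n d : ℕ} (h : MvPolynomial (Fin n) ℝ)
    (hd : h.IsHomogeneous d) (U : Set (Fin n → ℝ)) (hU : IsOpen U) :
    (∀ e ∈ U, Hyperbolic h e) ↔
      ∀ x ∈ U, ∀ y : Fin n → ℝ,
        aeval (fun i => (x i : ℂ) + (y i : ℂ) * Complex.I) h ≠ 0 :=
  hyperbolic_iff_nonvanishing_tube_general h hd U
end

section
/- Suppose h is hyperbolic with respect to e, q is hyperbolic with respect to e with Λ₊(h,e) ⊆ Λ₊(q,e), and q(x)h(x) = det(Σ_{i=1}^n x_i A_i) where the A_i are symmetric matrices with Σ_i e_i A_i positive definite. Then Λ₊(h,e) = {x ∈ ℝⁿ : Σ_{i=1}^n x_i A_i is positive semidefinite}; in particular Λ₊(h,e) is spectrahedral. -/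
open MvPolynomial

/-- The hyperbolicity cone: the closure of the connected component of `{x : h(x) ≠ 0}`
containing `e`. -/
noncomputable def hypCone {n : ℕ} (h : MvPolynomial (Fin n) ℝ) (e : Fin n → ℝ) :
    Set (Fin n → ℝ) :=
  closure (connectedComponentIn {x | eval x h ≠ 0} e)

/-!
For homogeneous `g` of degree `d`, hyperbolic with respect to `e`, the polynomial
`t ↦ g(x + t e)` has degree `d`, leading coefficient `g(e)` and only real roots. Its
coefficients, multiplied by `g(e)`, are all positive as soon as it has no root in `[0, ∞)`.
Positivity of these coefficients is an open condition, their nonnegativity a closed one, and on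
the connected component of `e` in `{g ≠ 0}` the closed condition implies the open one; so the
closure `Λ₊(g, e)` of that component satisfies the closed condition, which gives
`g(x + s e) g(e) > 0` for `x ∈ Λ₊(g, e)` and `s > 0`.

Write `M(x) = ∑ xᵢ Aᵢ`. Factors of the homogeneous polynomial `det M(x)` are homogeneous, so this
applies to `h` and `q`. For `x ∈ Λ₊(h, e) ⊆ Λ₊(q, e)` the pencil `M(x) + s M(e)` is therefore
nonsingular for every `s > 0`; if `M(x)` had a negative direction, the minimum `μ < 0` of the
Rayleigh quotient `vᵀ M(x) v / vᵀ M(e) v` would make `M(x) - μ M(e)` singular. Conversely the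
positive definite part `{x | M(x) ≻ 0}` is convex, contains `e` and avoids the zeros of `h`, so it
lies in the component of `e`, and its closure contains every `x` with `M(x) ⪰ 0`.
-/

theorem Multiset.esymm_pos {R : Type*} [CommSemiring R] [PartialOrder R] [IsStrictOrderedRing R]
    {s : Multiset R} (hs : ∀ r ∈ s, 0 < r) {k : ℕ} (hk : k ≤ card s) : 0 < s.esymm k := by
  have hne : s.powersetCard k ≠ 0 := by
    simpa [← Multiset.card_pos, Multiset.card_powersetCard] using Nat.choose_pos hk
  simpa [Multiset.esymm] using Multiset.sum_lt_sum_of_nonempty hne (f := 0) fun t ht =>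
    Multiset.prod_pos fun r hr => hs r (Multiset.mem_of_le (Multiset.mem_powersetCard.mp ht).1 hr)

namespace Polynomial

theorem coeff_prod_sum_of_natDegree_le {ι R : Type*} [CommSemiring R] (s : Finset ι)
    (f : ι → R[X]) (k : ι → ℕ) (h : ∀ i ∈ s, (f i).natDegree ≤ k i) :
    (∏ i ∈ s, f i).coeff (∑ i ∈ s, k i) = ∏ i ∈ s, (f i).coeff (k i) := by
  classical
  induction s using Finset.induction_on with
  | empty => simp
  | insert a s ha ih =>
    rw [Finset.forall_mem_insert] at h
    rw [Finset.prod_insert ha, Finset.sum_insert ha, Finset.prod_insert ha,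
      coeff_mul_add_eq_of_natDegree_le h.1 ((natDegree_prod_le _ _).trans (Finset.sum_le_sum h.2)),
      ih h.2]

open ComplexOrder in
theorem coeff_mul_leadingCoeff_pos {p : ℝ[X]}
    (hreal : ∀ z : ℂ, aeval z p = 0 → z.im = 0) (hpos : ∀ s : ℝ, 0 ≤ s → p.eval s ≠ 0)
    {i : ℕ} (hi : i ≤ p.natDegree) : 0 < p.coeff i * p.leadingCoeff := by
  set P := p.map (algebraMap ℝ ℂ)
  have hlc : p.leadingCoeff ≠ 0 := fun h => hpos 0 le_rfl (by simp [leadingCoeff_eq_zero.mp h])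
  have hneg_roots : ∀ z ∈ P.roots.map Neg.neg, 0 < z := by
    simp only [Multiset.mem_map]
    rintro _ ⟨z, hz, rfl⟩
    have hz0 : aeval z p = 0 := by
      rw [aeval_def, eval₂_eq_eval_map]
      exact (mem_roots'.mp hz).2
    have him := hreal z hz0
    have hre : z.re < 0 := by
      by_contra! h
      apply hpos z.re h
      have hz' : z = algebraMap ℝ ℂ z.re := Complex.ext rfl (by simp [him])
      rw [hz', aeval_algebraMap_apply_eq_algebraMap_eval] at hz0
      exact (map_eq_zero_iff _ (algebraMap ℝ ℂ).injective).mp hz0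
    rw [Complex.pos_iff]
    simp [him, hre]
  set R := P.roots.map Neg.neg
  have hcard : R.card = p.natDegree := by
    rw [Multiset.card_map,
      IsAlgClosed.card_roots_map_eq_natDegree_of_injective _ (RingHom.injective _)]
  have hfac : P = C (p.leadingCoeff : ℂ) * (R.map fun r => X + C r).prod := by
    have := C_leadingCoeff_mul_prod_multiset_X_sub_C (p := P) IsAlgClosed.card_roots_eq_natDegree
    rw [leadingCoeff_map_of_injective (algebraMap ℝ ℂ).injective, Complex.coe_algebraMap] at this
    simpa [R, Multiset.map_map, ← sub_eq_add_neg] using this.symm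
  have hcoeff : (p.coeff i : ℂ) = p.leadingCoeff * R.esymm (p.natDegree - i) := by
    have : P.coeff i = (p.coeff i : ℂ) := by simp [P]
    rw [← this, hfac, coeff_C_mul, Multiset.prod_X_add_C_coeff _ (hcard ▸ hi), hcard]
  rw [← Complex.zero_lt_real]
  push_cast
  rw [hcoeff]
  calc (0 : ℂ) < (p.leadingCoeff : ℂ) * p.leadingCoeff * R.esymm (p.natDegree - i) :=
        mul_pos (by exact_mod_cast mul_self_pos.mpr hlc) (Multiset.esymm_pos hneg_roots (by omega))
    _ = _ := by ring

end Polynomial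

namespace MvPolynomial

section Grading

variable {σ R : Type*} [CommSemiring R]

noncomputable def gradePoly : MvPolynomial σ R →ₐ[R] Polynomial (MvPolynomial σ R) :=
  aeval fun i => Polynomial.C (X i) * Polynomial.X

theorem coeff_gradePoly (p : MvPolynomial σ R) (k : ℕ) :
    (gradePoly p).coeff k = homogeneousComponent k p := by
  induction p using MvPolynomial.induction_on' with
  | monomial α c =>
    have : gradePoly (monomial α c) = Polynomial.C (monomial α c) * Polynomial.X ^ α.degree := by
      rw [gradePoly, aeval_monomial, Finsupp.prod, monomial_eq, Finsupp.prod, map_mul, map_prod]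
      simp only [mul_pow, Finset.prod_mul_distrib, Finset.prod_pow_eq_pow_sum, map_pow,
        Polynomial.algebraMap_apply, algebraMap_eq, Finsupp.degree_apply]
      ring
    rw [this, Polynomial.coeff_C_mul_X_pow,
      homogeneousComponent_of_mem (isHomogeneous_monomial c rfl)]
  | add p q hp hq => simp [hp, hq]

theorem eval_map_gradePoly (x : σ → R) (r : R) (p : MvPolynomial σ R) :
    ((gradePoly p).map (eval x)).eval r = eval (r • x) p := by
  induction p using MvPolynomial.induction_on with
  | C a => simp [gradePoly]
  | add p q hp hq => simp [hp, hq]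
  | mul_X p i hp =>
    simp only [map_mul, Polynomial.map_mul, Polynomial.eval_mul, hp]
    simp [gradePoly]
    ring

theorem gradePoly_ne_zero {p : MvPolynomial σ R} (hp : p ≠ 0) : gradePoly p ≠ 0 := by
  refine fun h => hp ?_
  rw [← sum_homogeneousComponent p]
  exact Finset.sum_eq_zero fun k _ => by rw [← coeff_gradePoly, h, Polynomial.coeff_zero]

theorem IsHomogeneous.gradePoly_eq {p : MvPolynomial σ R} {n : ℕ} (hp : p.IsHomogeneous n) :
    gradePoly p = Polynomial.C p * Polynomial.X ^ n := by
  ext1 k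
  rw [coeff_gradePoly, Polynomial.coeff_C_mul_X_pow, homogeneousComponent_of_mem hp, eq_comm]

theorem IsHomogeneous.eval_smul {p : MvPolynomial σ R} {n : ℕ} (hp : p.IsHomogeneous n) (r : R)
    (x : σ → R) : eval (r • x) p = r ^ n * eval x p := by
  rw [← eval_map_gradePoly, hp.gradePoly_eq]
  simp only [Polynomial.map_mul, Polynomial.map_C, Polynomial.map_pow, Polynomial.map_X,
    Polynomial.eval_mul, Polynomial.eval_C, Polynomial.eval_pow, Polynomial.eval_X]
  ring

theorem isHomogeneous_of_forall_homogeneousComponent_eq_zero {p : MvPolynomial σ R} {n : ℕ}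
    (h : ∀ k ≠ n, homogeneousComponent k p = 0) : p.IsHomogeneous n := by
  intro α hα
  by_contra hk
  have := congrArg (coeff α) (h _ hk)
  simp [coeff_homogeneousComponent, Finsupp.degree_eq_weight_one, Pi.one_def] at this
  exact hα this

end Grading

theorem IsHomogeneous.exists_isHomogeneous_of_mul_left {σ R : Type*} [CommRing R] [IsDomain R]
    {p q : MvPolynomial σ R} {n : ℕ} (hpq : (p * q).IsHomogeneous n) (hq : q ≠ 0) :
    ∃ m, p.IsHomogeneous m := by
  rcases eq_or_ne p 0 with rfl | hp
  · exact ⟨0, isHomogeneous_zero _ _ _⟩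
  -- Under `gradePoly`, homogeneous means monomial in `T`; over a domain, both the degree and the
  -- trailing degree are additive, so a factor of a monomial is a monomial.
  have hGp := gradePoly_ne_zero hp
  have hGq := gradePoly_ne_zero hq
  have hG : gradePoly p * gradePoly q = Polynomial.monomial n (p * q) := by
    rw [← map_mul, hpq.gradePoly_eq, Polynomial.C_mul_X_pow_eq_monomial]
  have hdeg := Polynomial.natDegree_mul hGp hGq
  have htrail := Polynomial.natTrailingDegree_mul hGp hGq
  rw [hG, Polynomial.natDegree_monomial_eq _ (mul_ne_zero hp hq)] at hdeg
  rw [hG, Polynomial.natTrailingDegree_monomial (mul_ne_zero hp hq)] at htrail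
  have := (gradePoly p).natTrailingDegree_le_natDegree
  have := (gradePoly q).natTrailingDegree_le_natDegree
  refine ⟨(gradePoly p).natDegree,
    isHomogeneous_of_forall_homogeneousComponent_eq_zero fun k hk => ?_⟩
  rw [← coeff_gradePoly]
  rcases hk.lt_or_gt with hk | hk
  · exact Polynomial.coeff_eq_zero_of_lt_natTrailingDegree (by omega)
  · exact Polynomial.coeff_eq_zero_of_natDegree_lt hk

section Ray

variable {σ R : Type*} [CommSemiring R]

noncomputable def rayPoly (e : σ → R) : MvPolynomial σ R →ₐ[R] Polynomial (MvPolynomial σ R) :=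
  aeval fun i => Polynomial.C (X i) + Polynomial.C (C (e i)) * Polynomial.X

theorem aeval_map_rayPoly {S : Type*} [CommSemiring S] [Algebra R S] (e x : σ → R) (t : S)
    (p : MvPolynomial σ R) :
    Polynomial.aeval t ((rayPoly e p).map (eval x)) =
      aeval (fun i => algebraMap R S (x i) + t * algebraMap R S (e i)) p := by
  induction p using MvPolynomial.induction_on with
  | C a => simp [rayPoly]
  | add p q hp hq => simp [hp, hq]
  | mul_X p i hp =>
    simp only [map_mul, Polynomial.map_mul, hp]
    simp [rayPoly, mul_comm t]

theorem eval_map_rayPoly (e x : σ → R) (t : R) (p : MvPolynomial σ R) :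
    ((rayPoly e p).map (eval x)).eval t = eval (x + t • e) p := by
  have hx : x + t • e = fun i => x i + t * e i := rfl
  simpa [hx, Polynomial.coe_aeval_eq_eval] using aeval_map_rayPoly e x t p

theorem natDegree_rayPoly_X_pow_le (e : σ → R) (i : σ) (k : ℕ) :
    (rayPoly e (X i) ^ k).natDegree ≤ k := by
  have : (rayPoly e (X i)).natDegree ≤ 1 := by
    rw [rayPoly, aeval_X, add_comm]
    exact Polynomial.natDegree_linear_le
  simpa using Polynomial.natDegree_pow_le_of_le k this

theorem coeff_rayPoly_X_pow (e : σ → R) (i : σ) (k : ℕ) :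
    (rayPoly e (X i) ^ k).coeff k = C (e i ^ k) := by
  simpa [rayPoly] using
    Polynomial.coeff_pow_of_natDegree_le (m := k) (natDegree_rayPoly_X_pow_le e i 1)

theorem rayPoly_monomial (e : σ → R) (α : σ →₀ ℕ) (c : R) :
    rayPoly e (monomial α c) = Polynomial.C (C c) * ∏ i ∈ α.support, rayPoly e (X i) ^ α i := by
  rw [monomial_eq, map_mul, Finsupp.prod, map_prod]
  simp [rayPoly]

variable {p : MvPolynomial σ R} {n : ℕ}

theorem IsHomogeneous.natDegree_rayPoly_le (hp : p.IsHomogeneous n) (e : σ → R) :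
    (rayPoly e p).natDegree ≤ n := by
  conv_lhs => rw [p.as_sum, map_sum]
  refine Polynomial.natDegree_sum_le_of_forall_le _ _ fun α hα => ?_
  rw [rayPoly_monomial, hp.degree_eq_sum_deg_support hα]
  exact (Polynomial.natDegree_C_mul_le _ _).trans ((Polynomial.natDegree_prod_le _ _).trans
    (Finset.sum_le_sum fun i _ => natDegree_rayPoly_X_pow_le e i (α i)))

theorem IsHomogeneous.coeff_rayPoly (hp : p.IsHomogeneous n) (e : σ → R) :
    (rayPoly e p).coeff n = C (eval e p) := by
  conv_lhs => rw [p.as_sum, map_sum, Polynomial.finsetSum_coeff]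
  rw [eval_eq, map_sum]
  refine Finset.sum_congr rfl fun α hα => ?_
  rw [rayPoly_monomial, Polynomial.coeff_C_mul, hp.degree_eq_sum_deg_support hα,
    Polynomial.coeff_prod_sum_of_natDegree_le _ _ _ fun i _ => natDegree_rayPoly_X_pow_le e i (α i)]
  simp [coeff_rayPoly_X_pow]

theorem IsHomogeneous.eval_add_smul_mul_pos_of_coeff_rayPoly_nonneg {g : MvPolynomial σ ℝ}
    {e : σ → ℝ} (hg : eval e g ≠ 0) (hhom : g.IsHomogeneous n) {x : σ → ℝ}
    (hx : ∀ i ≤ n, 0 ≤ eval x ((rayPoly e g).coeff i) * eval e g) {s : ℝ} (hs : 0 < s) :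
    0 < eval (x + s • e) g * eval e g := by
  rw [← eval_map_rayPoly, Polynomial.eval_eq_sum_range' (n := n + 1)
    (Nat.lt_succ_of_le (Polynomial.natDegree_map_le.trans (hhom.natDegree_rayPoly_le e))),
    Finset.sum_mul]
  refine Finset.sum_pos' (fun i hi => ?_) ⟨n, Finset.self_mem_range_succ n, ?_⟩
  · rw [Polynomial.coeff_map, mul_right_comm]
    exact mul_nonneg (hx i (Finset.mem_range_succ_iff.mp hi)) (pow_nonneg hs.le i)
  · rw [Polynomial.coeff_map, hhom.coeff_rayPoly, eval_C, mul_right_comm]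
    exact mul_pos (mul_self_pos.mpr hg) (pow_pos hs n)

end Ray

end MvPolynomial

section HyperbolicityCone

variable {n d : ℕ} {g : MvPolynomial (Fin n) ℝ} {e : Fin n → ℝ}

theorem Hyperbolic.coeff_rayPoly_mul_pos (hg : Hyperbolic g e) (hhom : g.IsHomogeneous d)
    {x : Fin n → ℝ} (hx : ∀ s : ℝ, 0 ≤ s → eval (x + s • e) g ≠ 0) {i : ℕ} (hi : i ≤ d) :
    0 < eval x ((rayPoly e g).coeff i) * eval e g := by
  set p := (rayPoly e g).map (eval x)
  have htop : p.coeff d = eval e g := by simp [p, hhom.coeff_rayPoly]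
  have hdeg : p.natDegree = d :=
    Polynomial.natDegree_eq_of_le_of_coeff_ne_zero
      (Polynomial.natDegree_map_le.trans (hhom.natDegree_rayPoly_le e)) (htop ▸ hg.1)
  have hreal : ∀ z : ℂ, Polynomial.aeval z p = 0 → z.im = 0 := fun z hz =>
    hg.2 x z (by simpa [p, aeval_map_rayPoly] using hz)
  have hpos : ∀ s : ℝ, 0 ≤ s → p.eval s ≠ 0 := fun s hs => by
    simpa [p, eval_map_rayPoly] using hx s hs
  have := Polynomial.coeff_mul_leadingCoeff_pos hreal hpos (hdeg ▸ hi)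
  rwa [Polynomial.leadingCoeff, hdeg, htop, Polynomial.coeff_map] at this

theorem Hyperbolic.eval_add_smul_mul_pos (hg : Hyperbolic g e) (hhom : g.IsHomogeneous d)
    {x : Fin n → ℝ} (hx : x ∈ hypCone g e) {s : ℝ} (hs : 0 < s) :
    0 < eval (x + s • e) g * eval e g := by
  set c : ℕ → (Fin n → ℝ) → ℝ := fun i y => eval y ((rayPoly e g).coeff i) * eval e g
  have hc : ∀ i, Continuous (c i) := fun i => (continuous_eval _).mul continuous_const
  set K := {y | ∀ i ≤ d, 0 < c i y}
  set F := {y | ∀ i ≤ d, 0 ≤ c i y}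
  have hK_open : IsOpen K := by
    simp only [K, Set.ofPred_forall]
    exact (Set.finite_Iic d).isOpen_biInter fun i _ => isOpen_lt continuous_const (hc i)
  have hF_closed : IsClosed F := by
    simp only [F, Set.ofPred_forall]
    exact isClosed_biInter fun i _ => isClosed_le continuous_const (hc i)
  have hF_pos : ∀ y ∈ F, ∀ s : ℝ, 0 < s → 0 < eval (y + s • e) g * eval e g :=
    fun y hy s hs => hhom.eval_add_smul_mul_pos_of_coeff_rayPoly_nonneg hg.1 hy hs
  have hK_of_ne : ∀ y, (∀ s : ℝ, 0 ≤ s → eval (y + s • e) g ≠ 0) → y ∈ K :=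
    fun y hy i hi => hg.coeff_rayPoly_mul_pos hhom hy hi
  have he : e ∈ K := hK_of_ne e fun s hs => by
    rw [show e + s • e = (1 + s) • e by rw [add_smul, one_smul], hhom.eval_smul]
    exact mul_ne_zero (pow_ne_zero _ (by linarith)) hg.1
  have hCK : connectedComponentIn {y | eval y g ≠ 0} e ⊆ K := by
    refine isPreconnected_connectedComponentIn.subset_left_of_subset_union hK_open
      hF_closed.isOpen_compl (Set.disjoint_left.mpr fun y hyK hyF => hyF fun i hi => (hyK i hi).le)
      (fun y hy => ?_) ⟨e, mem_connectedComponentIn hg.1, he⟩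
    by_cases hyF : y ∈ F
    · refine Or.inl (hK_of_ne y fun s hs => ?_)
      rcases hs.eq_or_lt with rfl | hs
      · simpa using connectedComponentIn_subset _ _ hy
      · exact left_ne_zero_of_mul (hF_pos y hyF s hs).ne'
    · exact Or.inr hyF
  exact hF_pos x (closure_minimal (hCK.trans fun y hy i hi => (hy i hi).le) hF_closed hx) s hs

end HyperbolicityCone

namespace Matrix

theorem isHomogeneous_det {ι σ R : Type*} [Fintype ι] [DecidableEq ι] [CommRing R]
    {M : Matrix ι ι (MvPolynomial σ R)} (hM : ∀ j k, (M j k).IsHomogeneous 1) :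
    M.det.IsHomogeneous (Fintype.card ι) := by
  rw [det_apply]
  refine IsHomogeneous.sum _ _ _ fun τ _ => ?_
  have := IsHomogeneous.prod Finset.univ (fun j => M (τ j) j) (fun _ => 1) fun j _ => hM _ _
  simp only [Finset.sum_const, Finset.card_univ, smul_eq_mul, mul_one] at this
  rw [Units.smul_def]
  exact Submodule.smul_of_tower_mem (homogeneousSubmodule σ R _) _ this

section Pencil

variable {σ ι R : Type*} [Fintype σ] [Fintype ι] [DecidableEq ι] [CommRing R]

noncomputable def pencilDet (A : σ → Matrix ι ι R) : MvPolynomial σ R :=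
  (of fun j k => ∑ i, C (A i j k) * X i).det

theorem eval_pencilDet (A : σ → Matrix ι ι R) (x : σ → R) :
    eval x (pencilDet A) = (∑ i, x i • A i).det := by
  rw [pencilDet, RingHom.map_det]
  congr 1
  ext j k
  simp [sum_apply, mul_comm]

theorem isHomogeneous_pencilDet (A : σ → Matrix ι ι R) :
    (pencilDet A).IsHomogeneous (Fintype.card ι) :=
  isHomogeneous_det fun _ _ => IsHomogeneous.sum _ _ _ fun i _ => (isHomogeneous_X R i).C_mul _

end Pencil

theorem posSemidef_of_forall_det_add_smul_ne_zero {ι : Type*} [Fintype ι] [DecidableEq ι]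
    {A B : Matrix ι ι ℝ} (hA : A.IsHermitian) (hB : B.PosDef)
    (hdet : ∀ s : ℝ, 0 < s → (A + s • B).det ≠ 0) : A.PosSemidef := by
  set r : (ι → ℝ) → ℝ := fun w => (w ⬝ᵥ A *ᵥ w) / (w ⬝ᵥ B *ᵥ w)
  have hB_pos : ∀ w : ι → ℝ, w ≠ 0 → 0 < w ⬝ᵥ B *ᵥ w := fun w hw => by
    simpa using hB.dotProduct_mulVec_pos hw
  have hr_smul : ∀ (c : ℝ) (w : ι → ℝ), c ≠ 0 → r (c • w) = r w := fun c w hc => by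
    simp only [r, mulVec_smul, dotProduct_smul, smul_dotProduct, smul_eq_mul]
    rw [mul_div_mul_left _ _ hc, mul_div_mul_left _ _ hc]
  by_contra hnot
  obtain ⟨v, hv⟩ : ∃ v : ι → ℝ, v ⬝ᵥ A *ᵥ v < 0 := by
    by_contra! h
    exact hnot (PosSemidef.of_dotProduct_mulVec_nonneg hA fun w => by simpa using h w)
  have hv0 : v ≠ 0 := by rintro rfl; simp at hv
  set S := Metric.sphere (0 : ι → ℝ) 1
  have hS_ne : ∀ w ∈ S, w ≠ 0 := fun w hw h => by simp [S, h] at hw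
  have hunit : ∀ w : ι → ℝ, w ≠ 0 → ‖w‖⁻¹ • w ∈ S := fun w hw => by simp [S, norm_smul, hw]
  have hquad : ∀ C : Matrix ι ι ℝ, Continuous fun w : ι → ℝ => w ⬝ᵥ C *ᵥ w := fun C =>
    continuous_id.dotProduct (continuous_const.matrix_mulVec continuous_id)
  obtain ⟨w₀, hw₀, hmin⟩ := (isCompact_sphere (0 : ι → ℝ) 1).exists_isMinOn ⟨_, hunit v hv0⟩
    ((hquad A).continuousOn.div (hquad B).continuousOn fun w hw => (hB_pos w (hS_ne w hw)).ne')
  have hr_ge : ∀ w, w ≠ 0 → r w₀ ≤ r w := fun w hw => by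
    rw [← hr_smul _ w (inv_ne_zero (norm_ne_zero_iff.mpr hw))]
    exact hmin (hunit w hw)
  have hμ : r w₀ < 0 := (hr_ge v hv0).trans_lt (div_neg_of_neg_of_pos hv (hB_pos v hv0))
  have hpsd : (A + (-r w₀) • B).PosSemidef := by
    refine PosSemidef.of_dotProduct_mulVec_nonneg
      (hA.add (hB.isHermitian.smul (IsSelfAdjoint.all _))) fun w => ?_
    rcases eq_or_ne w 0 with rfl | hw
    · simp
    have := (le_div_iff₀ (hB_pos w hw)).mp (hr_ge w hw)
    simp only [star_trivial, add_mulVec, smul_mulVec, dotProduct_add, dotProduct_smul, smul_eq_mul]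
    linarith
  have hker : (A + (-r w₀) • B) *ᵥ w₀ = 0 := by
    refine (hpsd.dotProduct_mulVec_zero_iff w₀).mp ?_
    simp only [star_trivial, add_mulVec, smul_mulVec, dotProduct_add, dotProduct_smul, smul_eq_mul,
      r]
    field_simp [(hB_pos w₀ (hS_ne w₀ hw₀)).ne']
    ring
  exact hdet _ (neg_pos.mpr hμ) (exists_mulVec_eq_zero_iff.mp ⟨w₀, hS_ne w₀ hw₀, hker⟩)

theorem convex_setOf_posDef {ι : Type*} : Convex ℝ {A : Matrix ι ι ℝ | A.PosDef} := by
  intro A hA B hB a b ha hb hab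
  rcases ha.eq_or_lt with rfl | ha
  · simpa [show b = 1 by linarith] using hB
  · exact (hA.smul ha).add_posSemidef (hB.posSemidef.smul hb)

theorem setOf_posSemidef_subset_closure_connectedComponentIn {ι E : Type*} [AddCommGroup E]
    [Module ℝ E] [TopologicalSpace E] [IsTopologicalAddGroup E] [ContinuousSMul ℝ E]
    (M : E →ₗ[ℝ] Matrix ι ι ℝ) {e : E} (he : (M e).PosDef) {U : Set E}
    (hU : ∀ x, (M x).PosDef → x ∈ U) :
    {x | (M x).PosSemidef} ⊆ closure (connectedComponentIn U e) := by
  intro x hx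
  have hD : {y | (M y).PosDef} ⊆ connectedComponentIn U e :=
    (convex_setOf_posDef.linear_preimage M).isPreconnected.subset_connectedComponentIn he hU
  have hray : Set.MapsTo (fun t : ℝ => x + t • e) (Set.Ioi 0) {y | (M y).PosDef} :=
    fun t ht => by simpa using PosDef.posSemidef_add hx (he.smul ht)
  simpa using closure_mono hD
    (map_mem_closure (by fun_prop) (show (0 : ℝ) ∈ closure (Set.Ioi 0) by simp) hray)

end Matrix

/-- If `h`, `q` are hyperbolic w.r.t. `e` with `Λ₊(h,e) ⊆ Λ₊(q,e)` and
`q·h = det(Σ_i x_i A_i)` for symmetric matrices `A_i` with `Σ_i e_i A_i` positive definite,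
then `Λ₊(h,e) = {x : Σ_i x_i A_i ⪰ 0}`; in particular `Λ₊(h,e)` is spectrahedral. -/
theorem hypCone_spectrahedral_of_det_factor {n m : ℕ}
    (h q : MvPolynomial (Fin n) ℝ) (e : Fin n → ℝ)
    (hh : Hyperbolic h e) (hq : Hyperbolic q e)
    (hcone : hypCone h e ⊆ hypCone q e)
    (A : Fin n → Matrix (Fin m) (Fin m) ℝ) (hA : ∀ i, (A i).IsSymm)
    (hpd : (∑ i, e i • A i).PosDef)
    (hdet : ∀ x : Fin n → ℝ, eval x q * eval x h = (∑ i, x i • A i).det) :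
    hypCone h e = {x : Fin n → ℝ | (∑ i, x i • A i).PosSemidef} := by
  set M := Fintype.linearCombination ℝ A
  have hM : ∀ x, ∑ i, x i • A i = M x := fun x => (Fintype.linearCombination_apply ℝ A x).symm
  simp only [hM] at hpd hdet ⊢
  have hqh : (q * h).IsHomogeneous m := by
    rw [show q * h = Matrix.pencilDet A from MvPolynomial.funext fun x => by
      rw [map_mul, hdet, Matrix.eval_pencilDet, hM]]
    simpa using Matrix.isHomogeneous_pencilDet A
  have hq0 : q ≠ 0 := fun h0 => hq.1 (by simp [h0])
  have hh0 : h ≠ 0 := fun h0 => hh.1 (by simp [h0])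
  obtain ⟨dq, hq_hom⟩ := hqh.exists_isHomogeneous_of_mul_left hh0
  obtain ⟨dh, hh_hom⟩ := (mul_comm q h ▸ hqh).exists_isHomogeneous_of_mul_left hq0
  refine subset_antisymm (fun x hx => ?_)
    (Matrix.setOf_posSemidef_subset_closure_connectedComponentIn M hpd fun x hx =>
      right_ne_zero_of_mul (hdet x ▸ hx.det_pos.ne'))
  refine Matrix.posSemidef_of_forall_det_add_smul_ne_zero ?_ hpd fun s hs => ?_
  · rw [← hM, Matrix.isHermitian_iff_isSymm, Matrix.IsSymm, Matrix.transpose_sum]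
    simp only [Matrix.transpose_smul, (hA _).eq]
  · rw [← map_smul, ← map_add, ← hdet]
    exact mul_ne_zero (left_ne_zero_of_mul (hq.eval_add_smul_mul_pos hq_hom (hcone hx) hs).ne')
      (left_ne_zero_of_mul (hh.eval_add_smul_mul_pos hh_hom hx hs).ne')
end
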